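/- arXiv:1407.3371 — 2 statements merged into one kernel-verified Lean document; each statement's English description precedes it below -/
import Mathlib

section
/- Let u : ℝ → ℝ⁴ be a smooth curve with Minkowski norm ‖u‖² = ηαβ u^α u^β ≠ 0, and let s : ℝ⁴ be a constant vector. Define I(τ) = (s·u(τ))/‖u(τ)‖ where · is the Minkowski inner product. If u satisfies ε_{αβγδ} ü^β u^γ s^δ − 3((u̇·u)/‖u‖²) ε_{αβγδ} u̇^β u^γ s^δ − m₀(‖u‖² u̇_α − (u̇·u) u_α) = 0 for all τ, then I is constant along the curve. -/
noncomputable section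

/-- Minkowski metric signature (+,-,-,-) as a diagonal function. -/
def eta (a : Fin 4) : ℝ := if a = 0 then 1 else -1

/-- Minkowski inner product on ℝ⁴. -/
def mdot (v w : Fin 4 → ℝ) : ℝ := ∑ a, eta a * v a * w a

/-- Levi-Civita symbol ε_{abcd} with ε_{0123} = 1. -/
def lev (a b c d : Fin 4) : ℝ :=
  Matrix.det (Matrix.of ![(Pi.single a 1 : Fin 4 → ℝ), Pi.single b 1, Pi.single c 1, Pi.single d 1])

theorem lev_swap (a b c d : Fin 4) : lev d b c a = - lev a b c d := by
  unfold lev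
  have h : (Matrix.of ![(Pi.single d 1 : Fin 4 → ℝ), Pi.single b 1, Pi.single c 1, Pi.single a 1])
      = (Matrix.of ![(Pi.single a 1 : Fin 4 → ℝ), Pi.single b 1, Pi.single c 1,
          Pi.single d 1]).submatrix (Equiv.swap 0 3) id := by
    ext i j
    fin_cases i <;> simp [Equiv.swap_apply_def, Matrix.submatrix]
  rw [h, Matrix.det_permute]
  simp [Equiv.Perm.sign_swap]

theorem antisym_sum (f : Fin 4 → Fin 4 → ℝ) (h : ∀ a d, f a d = - f d a) :
    ∑ a, ∑ d, f a d = 0 := by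
  have h2 : ∑ a, ∑ d, f a d = - ∑ a, ∑ d, f a d := by
    calc ∑ a, ∑ d, f a d = ∑ a, ∑ d, -(f d a) := by
          exact Finset.sum_congr rfl fun a _ => Finset.sum_congr rfl fun d _ => h a d
      _ = - ∑ a, ∑ d, f d a := by simp
      _ = - ∑ a, ∑ d, f a d := by rw [Finset.sum_comm]
  linarith

theorem triple_comm (F : Fin 4 → Fin 4 → Fin 4 → ℝ) :
    ∑ β, ∑ γ, ∑ δ, F β γ δ = ∑ δ, ∑ β, ∑ γ, F β γ δ := by
  have h1 : ∀ β, ∑ γ, ∑ δ, F β γ δ = ∑ δ, ∑ γ, F β γ δ := fun β => Finset.sum_comm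
  rw [Finset.sum_congr rfl fun β _ => h1 β]
  exact Finset.sum_comm

theorem contract_zero (A v s : Fin 4 → ℝ) :
    ∑ α, s α * (∑ β, ∑ γ, ∑ δ, lev α β γ δ * A β * v γ * s δ) = 0 := by
  have step : ∀ α, s α * (∑ β, ∑ γ, ∑ δ, lev α β γ δ * A β * v γ * s δ)
      = ∑ δ, ∑ β, ∑ γ, s α * (lev α β γ δ * A β * v γ * s δ) := by
    intro α
    simp only [Finset.mul_sum]
    exact triple_comm _
  rw [Finset.sum_congr rfl fun α _ => step α]
  refine antisym_sum _ fun a d => ?_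
  rw [← Finset.sum_neg_distrib]
  refine Finset.sum_congr rfl fun β _ => ?_
  rw [← Finset.sum_neg_distrib]
  refine Finset.sum_congr rfl fun γ _ => ?_
  rw [lev_swap]
  ring

theorem comp_hasDeriv (u : ℝ → Fin 4 → ℝ) (hu : ContDiff ℝ (⊤ : ℕ∞) u) (τ : ℝ) (a : Fin 4) :
    HasDerivAt (fun t => u t a) (deriv u τ a) τ :=
  hasDerivAt_pi.mp ((hu.differentiable (by simp) τ).hasDerivAt) a

theorem mdot_deriv_left (u : ℝ → Fin 4 → ℝ) (s : Fin 4 → ℝ) (hu : ContDiff ℝ (⊤ : ℕ∞) u) (τ : ℝ) :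
    HasDerivAt (fun t => mdot s (u t)) (mdot s (deriv u τ)) τ := by
  unfold mdot
  apply HasDerivAt.fun_sum
  intro a _
  have h := ((comp_hasDeriv u hu τ a).const_mul (eta a * s a))
  convert h using 2

theorem mdot_sq_deriv (u : ℝ → Fin 4 → ℝ) (hu : ContDiff ℝ (⊤ : ℕ∞) u) (τ : ℝ) :
    HasDerivAt (fun t => mdot (u t) (u t)) (2 * mdot (deriv u τ) (u τ)) τ := by
  unfold mdot
  have h1 : ∀ (a : Fin 4), HasDerivAt (fun t => eta a * u t a * u t a)
      (eta a * (deriv u τ a * u τ a + u τ a * deriv u τ a)) τ := by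
    intro a
    have h := ((comp_hasDeriv u hu τ a).mul (comp_hasDeriv u hu τ a)).const_mul (eta a)
    rw [show (fun t => eta a * u t a * u t a) = fun t => eta a * ((fun t => u t a) * fun t => u t a) t
      from funext fun t => by simp only [Pi.mul_apply]; ring]
    exact h
  have h := HasDerivAt.fun_sum (fun a (_ : a ∈ Finset.univ) => h1 a)
  refine HasDerivAt.congr_deriv h (Eq.symm ?_)
  rw [Finset.mul_sum]
  exact Finset.sum_congr rfl fun a _ => by ring

theorem const_ratio (f G F' G' : ℝ → ℝ)
    (hf : ∀ τ, HasDerivAt f (F' τ) τ) (hG : ∀ τ, HasDerivAt G (G' τ) τ)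
    (hpos : ∀ τ, 0 < G τ)
    (hkey : ∀ τ, F' τ * G τ = G' τ / 2 * f τ) :
    ∀ τ₁ τ₂ : ℝ, f τ₁ / Real.sqrt (G τ₁) = f τ₂ / Real.sqrt (G τ₂) := by
  have hderiv : ∀ τ, HasDerivAt (fun t => f t / Real.sqrt (G t)) 0 τ := by
    intro τ
    have hsqpos : 0 < Real.sqrt (G τ) := Real.sqrt_pos.mpr (hpos τ)
    have hs : HasDerivAt (fun t => Real.sqrt (G t)) (G' τ / (2 * Real.sqrt (G τ))) τ := by
      have h := (Real.hasDerivAt_sqrt (ne_of_gt (hpos τ))).comp τ (hG τ)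
      rw [show G' τ / (2 * Real.sqrt (G τ)) = 1 / (2 * Real.sqrt (G τ)) * G' τ by ring]
      exact h
    have h := (hf τ).div hs (ne_of_gt hsqpos)
    refine HasDerivAt.congr_deriv h (Eq.symm ?_)
    have hs2 : Real.sqrt (G τ) ^ 2 = G τ := Real.sq_sqrt (le_of_lt (hpos τ))
    rw [eq_comm, div_eq_zero_iff]
    left
    field_simp
    have key : F' τ * Real.sqrt (G τ) * (2 * Real.sqrt (G τ)) = f τ * G' τ := by
      calc F' τ * Real.sqrt (G τ) * (2 * Real.sqrt (G τ))
          = 2 * (F' τ * Real.sqrt (G τ) ^ 2) := by ring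
        _ = 2 * (F' τ * G τ) := by rw [hs2]
        _ = 2 * (G' τ / 2 * f τ) := by rw [hkey τ]
        _ = f τ * G' τ := by ring
    linarith
  exact is_const_of_deriv_eq_zero (f := fun t => f t / Real.sqrt (G t))
    (fun τ => (hderiv τ).differentiableAt) (fun τ => (hderiv τ).deriv)

/-- The Mathisson spin equation implies that I(τ) = (s·u)/‖u‖ is
constant along the curve. -/
theorem mathisson_first_integral
    (u : ℝ → Fin 4 → ℝ) (s : Fin 4 → ℝ) (m₀ : ℝ)
    (hu : ContDiff ℝ (⊤ : ℕ∞) u) (hm : m₀ ≠ 0)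
    (hnz : ∀ τ, mdot (u τ) (u τ) ≠ 0)
    (heq : ∀ τ (α : Fin 4),
      (∑ β, ∑ γ, ∑ δ, lev α β γ δ * deriv (deriv u) τ β * u τ γ * s δ)
      - 3 * (mdot (deriv u τ) (u τ) / mdot (u τ) (u τ)) *
        (∑ β, ∑ γ, ∑ δ, lev α β γ δ * deriv u τ β * u τ γ * s δ)
      - m₀ * (mdot (u τ) (u τ) * (eta α * deriv u τ α)
              - mdot (deriv u τ) (u τ) * (eta α * u τ α)) = 0) :
    ∀ τ₁ τ₂ : ℝ,
      mdot s (u τ₁) / Real.sqrt |mdot (u τ₁) (u τ₁)|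
        = mdot s (u τ₂) / Real.sqrt |mdot (u τ₂) (u τ₂)| := by
  -- key identity from contracting the equation with s
  have key : ∀ τ, mdot (u τ) (u τ) * mdot s (deriv u τ)
      = mdot (deriv u τ) (u τ) * mdot s (u τ) := by
    intro τ
    set g := mdot (u τ) (u τ) with hg
    set p := mdot (deriv u τ) (u τ) with hp
    set c := 3 * (p / g) with hc
    have hsum : ∑ α, s α * ((∑ β, ∑ γ, ∑ δ, lev α β γ δ * deriv (deriv u) τ β * u τ γ * s δ)
        - c * (∑ β, ∑ γ, ∑ δ, lev α β γ δ * deriv u τ β * u τ γ * s δ)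
        - m₀ * (g * (eta α * deriv u τ α) - p * (eta α * u τ α))) = 0 := by
      rw [Finset.sum_congr rfl fun α _ => by rw [heq τ α]]
      simp
    have expand : ∑ α, s α * ((∑ β, ∑ γ, ∑ δ, lev α β γ δ * deriv (deriv u) τ β * u τ γ * s δ)
        - c * (∑ β, ∑ γ, ∑ δ, lev α β γ δ * deriv u τ β * u τ γ * s δ)
        - m₀ * (g * (eta α * deriv u τ α) - p * (eta α * u τ α)))
      = (∑ α, s α * (∑ β, ∑ γ, ∑ δ, lev α β γ δ * deriv (deriv u) τ β * u τ γ * s δ))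
        - c * (∑ α, s α * (∑ β, ∑ γ, ∑ δ, lev α β γ δ * deriv u τ β * u τ γ * s δ))
        - m₀ * (g * (∑ α, eta α * s α * deriv u τ α) - p * (∑ α, eta α * s α * u τ α)) := by
      have term : ∀ α : Fin 4, s α * ((∑ β, ∑ γ, ∑ δ, lev α β γ δ * deriv (deriv u) τ β * u τ γ * s δ)
          - c * (∑ β, ∑ γ, ∑ δ, lev α β γ δ * deriv u τ β * u τ γ * s δ)
          - m₀ * (g * (eta α * deriv u τ α) - p * (eta α * u τ α)))
        = s α * (∑ β, ∑ γ, ∑ δ, lev α β γ δ * deriv (deriv u) τ β * u τ γ * s δ)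
          - c * (s α * (∑ β, ∑ γ, ∑ δ, lev α β γ δ * deriv u τ β * u τ γ * s δ))
          - (m₀ * (g * (eta α * s α * deriv u τ α)) - m₀ * (p * (eta α * s α * u τ α))) :=
        fun α => by ring
      rw [Finset.sum_congr rfl fun α _ => term α]
      simp only [Finset.sum_sub_distrib, ← Finset.mul_sum]
      ring
    rw [expand, contract_zero, contract_zero] at hsum
    have h1 : (∑ α, eta α * s α * deriv u τ α) = mdot s (deriv u τ) := rfl
    have h2 : (∑ α, eta α * s α * u τ α) = mdot s (u τ) := rfl
    rw [h1, h2] at hsum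
    have hz : m₀ * (g * mdot s (deriv u τ) - p * mdot s (u τ)) = 0 := by linarith
    rcases mul_eq_zero.mp hz with h | h
    · exact absurd h hm
    · linarith
  -- continuity and sign constancy of g
  set g : ℝ → ℝ := fun τ => mdot (u τ) (u τ) with hgdef
  have hgc : Continuous g :=
    (Differentiable.continuous fun τ => (mdot_sq_deriv u hu τ).differentiableAt)
  have dich : (∀ τ, 0 < g τ) ∨ (∀ τ, g τ < 0) := by
    rcases lt_or_gt_of_ne (hnz 0) with h0 | h0
    · right
      intro τ
      by_contra h
      push_neg at h
      have hτ : 0 < g τ := lt_of_le_of_ne h (Ne.symm (hnz τ))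
      have : (0 : ℝ) ∈ Set.uIcc (g 0) (g τ) := Set.mem_uIcc.mpr (Or.inl ⟨le_of_lt h0, le_of_lt hτ⟩)
      obtain ⟨x, _, hx⟩ := intermediate_value_uIcc (hgc.continuousOn (s := Set.uIcc 0 τ)) this
      exact hnz x hx
    · left
      intro τ
      by_contra h
      push_neg at h
      have hτ : g τ < 0 := lt_of_le_of_ne h (hnz τ)
      have : (0 : ℝ) ∈ Set.uIcc (g 0) (g τ) := Set.mem_uIcc.mpr (Or.inr ⟨le_of_lt hτ, le_of_lt h0⟩)
      obtain ⟨x, _, hx⟩ := intermediate_value_uIcc (hgc.continuousOn (s := Set.uIcc 0 τ)) this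
      exact hnz x hx
  rcases dich with hpos | hneg
  · have habs : ∀ τ, |g τ| = g τ := fun τ => abs_of_pos (hpos τ)
    intro τ₁ τ₂
    rw [show |mdot (u τ₁) (u τ₁)| = g τ₁ from habs τ₁,
        show |mdot (u τ₂) (u τ₂)| = g τ₂ from habs τ₂]
    exact const_ratio (fun τ => mdot s (u τ)) g (fun τ => mdot s (deriv u τ))
      (fun τ => 2 * mdot (deriv u τ) (u τ))
      (fun τ => mdot_deriv_left u s hu τ) (fun τ => mdot_sq_deriv u hu τ) hpos
      (fun τ => by have := key τ; ring_nf; linarith) τ₁ τ₂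
  · have habs : ∀ τ, |g τ| = -g τ := fun τ => abs_of_neg (hneg τ)
    intro τ₁ τ₂
    rw [show |mdot (u τ₁) (u τ₁)| = -g τ₁ from habs τ₁,
        show |mdot (u τ₂) (u τ₂)| = -g τ₂ from habs τ₂]
    exact const_ratio (fun τ => mdot s (u τ)) (fun τ => -g τ) (fun τ => mdot s (deriv u τ))
      (fun τ => -(2 * mdot (deriv u τ) (u τ)))
      (fun τ => mdot_deriv_left u s hu τ) (fun τ => (mdot_sq_deriv u hu τ).neg)
      (fun τ => neg_pos.mpr (hneg τ))
      (fun τ => by have := key τ; ring_nf; linarith) τ₁ τ₂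
end
end

section
/- A function ξ : ℝ⁴ × ℝ⁴ → ℝ⁴, defining a third-order ODE ü = ξ(u̇, u) (suppressing x-dependence), satisfies the autoparallel reparametrization-compatibility conditions u̇^α − (1/3)(∂ξ^α/∂u̇^β) u^β = κ u^α and ξ^α − (1/3)(∂ξ^α/∂u^β) u^β − (2/3)(∂ξ^α/∂u̇^β) u̇^β = μ u^α with κ = 0, μ = 0, when ξ^α(u̇,u) = 3((u̇·u)/‖u‖²) u̇^α − 3[((u̇·u)²/‖u‖⁴) − (1/2)(‖u̇‖²/‖u‖²)] u^α for all u with ‖u‖² ≠ 0 (taking the spin term and constant A equal to zero). -/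
/-!
The right-hand side ξ(u̇, u) is weighted homogeneous: ξ(s² u̇, s u) = s³ ξ(u̇, u), so Euler's
identity gives 2 ∂_{u̇}ξ · u̇ + ∂_u ξ · u = 3 ξ, which is the second condition. Along the line
u̇ + t u the products u̇·u and ‖u̇‖² are polynomial in t and ξ(u̇ + t u, u) = ξ + 3t u̇ + (3/2)t² u,
so ∂_{u̇}ξ · u = 3 u̇, which is the first condition. The sums over β are the Jacobians applied to
the vectors u and u̇.
-/

noncomputable section

/-- The right-hand side ξ of the third-order equation (with spin term and A zero). -/
def xiRHS (du u : Fin 4 → ℝ) : Fin 4 → ℝ := fun α =>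
  3 * (mdot du u / mdot u u) * du α
  - 3 * ((mdot du u)^2 / (mdot u u)^2 - (1/2) * (mdot du du / mdot u u)) * u α

section Calculus

variable {𝕜 : Type*} [NontriviallyNormedField 𝕜]
  {E : Type*} [NormedAddCommGroup E] [NormedSpace 𝕜 E]
  {F : Type*} [NormedAddCommGroup F] [NormedSpace 𝕜 F]
  {G : Type*} [NormedAddCommGroup G] [NormedSpace 𝕜 G]

theorem ContinuousLinearMap.sum_apply_single_mul {ι : Type*} [Fintype ι] [DecidableEq ι]
    (L : (ι → 𝕜) →L[𝕜] 𝕜) (w : ι → 𝕜) :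
    ∑ i, L (Pi.single i 1) * w i = L w := by
  conv_rhs => rw [← Finset.univ_sum_single w, map_sum]
  refine Finset.sum_congr rfl fun i _ => ?_
  have hsingle : Pi.single i (w i) = w i • (Pi.single i 1 : ι → 𝕜) := by
    rw [← Pi.single_smul', smul_eq_mul, mul_one]
  rw [hsingle, map_smul, smul_eq_mul, mul_comm]

theorem HasFDerivAt.apply_eq_fderiv_add_fderiv {Φ : E × F → G} {D : E × F →L[𝕜] G}
    {x : E} {y : F} (hΦ : HasFDerivAt Φ D (x, y)) (a : E) (b : F) :
    D (a, b) = fderiv 𝕜 (fun v => Φ (v, y)) x a + fderiv 𝕜 (fun w => Φ (x, w)) y b := by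
  have hleft : HasFDerivAt (fun v => Φ (v, y)) (D.comp (.inl 𝕜 E F)) x :=
    hΦ.comp x (hasFDerivAt_prodMk_left x y)
  have hright : HasFDerivAt (fun w => Φ (x, w)) (D.comp (.inr 𝕜 E F)) y :=
    hΦ.comp y (hasFDerivAt_prodMk_right x y)
  simp [hleft.fderiv, hright.fderiv, ← map_add]

theorem HasFDerivAt.euler_of_weighted_homogeneous
    {Φ : E × F → G} {D : E × F →L[𝕜] G} {x : E} {y : F} (hΦ : HasFDerivAt Φ D (x, y))
    (m n k : ℕ) (hom : ∀ s : 𝕜, Φ (s ^ m • x, s ^ n • y) = s ^ k • Φ (x, y)) :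
    D ((m : 𝕜) • x, (n : 𝕜) • y) = (k : 𝕜) • Φ (x, y) := by
  have hcurve :
      HasDerivAt (fun s : 𝕜 => (s ^ m • x, s ^ n • y)) ((m : 𝕜) • x, (n : 𝕜) • y) 1 := by
    simpa using ((hasDerivAt_pow m (1 : 𝕜)).smul_const x).prodMk
      ((hasDerivAt_pow n (1 : 𝕜)).smul_const y)
  have hcomp := hΦ.comp_hasDerivAt_of_eq 1 hcurve (by simp)
  have hpow : HasDerivAt (fun s : 𝕜 => s ^ k • Φ (x, y)) ((k : 𝕜) • Φ (x, y)) 1 := by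
    simpa using (hasDerivAt_pow k (1 : 𝕜)).smul_const (Φ (x, y))
  exact hcomp.unique (by simpa only [Function.comp_def, hom] using hpow)

end Calculus

theorem mdot_comm (v w : Fin 4 → ℝ) : mdot v w = mdot w v :=
  Finset.sum_congr rfl fun _ _ => by ring

theorem mdot_add_left (v v' w : Fin 4 → ℝ) : mdot (v + v') w = mdot v w + mdot v' w := by
  simp only [mdot, ← Finset.sum_add_distrib, Pi.add_apply]
  exact Finset.sum_congr rfl fun _ _ => by ring

theorem mdot_add_right (v w w' : Fin 4 → ℝ) : mdot v (w + w') = mdot v w + mdot v w' := by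
  rw [mdot_comm, mdot_add_left, mdot_comm w, mdot_comm w']

theorem mdot_smul_left (c : ℝ) (v w : Fin 4 → ℝ) : mdot (c • v) w = c * mdot v w := by
  simp only [mdot, Finset.mul_sum, Pi.smul_apply, smul_eq_mul]
  exact Finset.sum_congr rfl fun _ _ => by ring

theorem mdot_smul_right (c : ℝ) (v w : Fin 4 → ℝ) : mdot v (c • w) = c * mdot v w := by
  rw [mdot_comm, mdot_smul_left, mdot_comm]

theorem differentiable_mdot :
    Differentiable ℝ fun p : (Fin 4 → ℝ) × (Fin 4 → ℝ) => mdot p.1 p.2 := by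
  unfold mdot
  fun_prop

theorem differentiableAt_xiRHS (du : Fin 4 → ℝ) {u : Fin 4 → ℝ} (hu : mdot u u ≠ 0) (α : Fin 4) :
    DifferentiableAt ℝ (fun p : (Fin 4 → ℝ) × (Fin 4 → ℝ) => xiRHS p.1 p.2 α) (du, u) := by
  have hmdot := differentiable_mdot
  unfold xiRHS
  fun_prop (disch := simp [hu])

theorem xiRHS_smul_smul (s : ℝ) (du u : Fin 4 → ℝ) :
    xiRHS (s ^ 2 • du) (s • u) = s ^ 3 • xiRHS du u := by
  rcases eq_or_ne s 0 with rfl | hs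
  · ext α
    simp [xiRHS]
  ext α
  simp only [xiRHS, mdot_smul_left, mdot_smul_right, Pi.smul_apply, smul_eq_mul]
  field_simp

theorem xiRHS_add_smul {u : Fin 4 → ℝ} (hu : mdot u u ≠ 0) (du : Fin 4 → ℝ) (t : ℝ) :
    xiRHS (du + t • u) u = xiRHS du u + (3 * t) • du + (3 / 2 * t ^ 2) • u := by
  ext α
  simp only [xiRHS, mdot_add_left, mdot_add_right, mdot_smul_left, mdot_smul_right,
    mdot_comm u du, Pi.add_apply, Pi.smul_apply, smul_eq_mul]
  field_simp
  ring

theorem hasLineDerivAt_xiRHS {u : Fin 4 → ℝ} (hu : mdot u u ≠ 0) (du : Fin 4 → ℝ) (α : Fin 4) :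
    HasLineDerivAt ℝ (fun v => xiRHS v u α) (3 * du α) du u := by
  have hpoly : HasDerivAt (fun t : ℝ => xiRHS du u α + 3 * t * du α + 3 / 2 * t ^ 2 * u α)
      (3 * du α) 0 := by
    simpa using (((hasDerivAt_id (0 : ℝ)).const_mul 3).mul_const (du α)).const_add
      (xiRHS du u α) |>.fun_add (((hasDerivAt_pow 2 (0 : ℝ)).const_mul (3 / 2)).mul_const (u α))
  have hline : (fun t : ℝ => xiRHS (du + t • u) u α)
      = fun t => xiRHS du u α + 3 * t * du α + 3 / 2 * t ^ 2 * u α := by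
    simp [xiRHS_add_smul hu]
  rw [HasLineDerivAt, hline]
  exact hpoly

theorem fderiv_xiRHS_fst_apply_snd (du : Fin 4 → ℝ) {u : Fin 4 → ℝ} (hu : mdot u u ≠ 0)
    (α : Fin 4) :
    fderiv ℝ (fun v => xiRHS v u α) du u = 3 * du α := by
  have hpartial : DifferentiableAt ℝ (fun v => xiRHS v u α) du :=
    (differentiableAt_xiRHS du hu α).comp (g := fun p => xiRHS p.1 p.2 α)
      (f := fun v => (v, u)) du (by fun_prop)
  rw [← hpartial.lineDeriv_eq_fderiv]
  exact (hasLineDerivAt_xiRHS hu du α).lineDeriv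

theorem xiRHS_euler (du : Fin 4 → ℝ) {u : Fin 4 → ℝ} (hu : mdot u u ≠ 0) (α : Fin 4) :
    2 * fderiv ℝ (fun v => xiRHS v u α) du du + fderiv ℝ (fun y => xiRHS du y α) u u
      = 3 * xiRHS du u α := by
  have hΦ := (differentiableAt_xiRHS du hu α).hasFDerivAt
  have h := hΦ.euler_of_weighted_homogeneous 2 1 3
    fun s => by simpa using congrFun (xiRHS_smul_smul s du u) α
  rw [hΦ.apply_eq_fderiv_add_fderiv] at h
  simpa using h

/-- ξ satisfies the autoparallel reparametrization-compatibility
conditions with κ = 0 and μ = 0. -/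
theorem xi_autoparallel_conditions :
    ∀ (du u : Fin 4 → ℝ), mdot u u ≠ 0 →
      (∀ α : Fin 4,
        du α - (1/3) * ∑ β, fderiv ℝ (fun v => xiRHS v u α) du (Pi.single β 1) * u β
          = (0 : ℝ) * u α) ∧
      (∀ α : Fin 4,
        xiRHS du u α
        - (1/3) * ∑ β, fderiv ℝ (fun y => xiRHS du y α) u (Pi.single β 1) * u β
        - (2/3) * ∑ β, fderiv ℝ (fun v => xiRHS v u α) du (Pi.single β 1) * du β
          = (0 : ℝ) * u α) := by
  intro du u hu
  simp only [ContinuousLinearMap.sum_apply_single_mul, zero_mul]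
  refine ⟨fun α => ?_, fun α => ?_⟩
  · rw [fderiv_xiRHS_fst_apply_snd du hu]
    ring
  · linarith [xiRHS_euler du hu α]
end
end
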